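/- arXiv:2201.05321 — 7 statements merged into one kernel-verified Lean document; each statement's English description precedes it below -/
import Mathlib

section
/- Suppose R₀ > 1 and set S* = (q+μ)/β, I* = (μ/β)(R₀ − 1), and define V(S, I) = S − S* − S* log(S/S*) + I − I* − I* log(I/I*) for S, I > 0. Then the derivative of V along the planar SIR vector field satisfies, for all S > 0 and I > 0, (1 − S*/S)(A − βSI − μS) + (1 − I*/I)(βSI − (q+μ)I) = −(μ + βI*)(S − S*)²/S ≤ 0. -/
/-- For `R₀ > 1`, with `S* = (q+μ)/β` and `I* = (μ/β)(R₀ − 1)`, the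
derivative of the Lyapunov function `V(S,I) = S − S* − S* log(S/S*) + I − I* − I* log(I/I*)`
along the SIR vector field satisfies, for all `S, I > 0`,
`(1 − S*/S)(A − βSI − μS) + (1 − I*/I)(βSI − (q+μ)I) = −(μ + βI*)(S − S*)²/S ≤ 0`. -/
theorem sir_lyapunov_endemic (A β μ q : ℝ) (hA : 0 < A) (hβ : 0 < β) (hμ : 0 < μ) (hq : 0 < q)
    (R₀ : ℝ) (hR : R₀ = A * β / (μ * (q + μ))) (hR1 : 1 < R₀)
    (Sstar Istar : ℝ) (hS : Sstar = (q + μ) / β) (hI : Istar = μ / β * (R₀ - 1)) :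
    ∀ S I : ℝ, 0 < S → 0 < I →
      (1 - Sstar / S) * (A - β * S * I - μ * S)
        + (1 - Istar / I) * (β * S * I - (q + μ) * I)
        = -((μ + β * Istar) * (S - Sstar) ^ 2 / S) ∧
      (1 - Sstar / S) * (A - β * S * I - μ * S)
        + (1 - Istar / I) * (β * S * I - (q + μ) * I) ≤ 0 := by
  intro S I hSp hIp
  have hβ' : β ≠ 0 := ne_of_gt hβ
  have hμ' : (μ * (q + μ)) ≠ 0 := by positivity
  have hAeq : A = β * Sstar * Istar + μ * Sstar := by
    subst hS hI hR; field_simp; ring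
  have hIstar : 0 ≤ Istar := by
    rw [hI]; have : 0 ≤ R₀ - 1 := by linarith
    positivity
  have key : (1 - Sstar / S) * (A - β * S * I - μ * S)
        + (1 - Istar / I) * (β * S * I - (q + μ) * I)
        = -((μ + β * Istar) * (S - Sstar) ^ 2 / S) := by
    subst hAeq
    have hqμ : q + μ = β * Sstar := by rw [hS]; field_simp
    rw [hqμ]
    field_simp
    ring
  refine ⟨key, ?_⟩
  rw [key]
  have : 0 ≤ (μ + β * Istar) * (S - Sstar) ^ 2 / S := by positivity
  linarith
end

section
/- Suppose R₀ ≤ 1 and define V(S, I) = S − A/μ − (A/μ) log(μS/A) + I for S > 0, I ≥ 0. Then the derivative of V along the planar SIR vector field satisfies, for all S > 0 and I ≥ 0, (1 − A/(μS))(A − βSI − μS) + (βSI − (q+μ)I) = −μ(S − A/μ)²/S + (q+μ)(R₀ − 1)I ≤ 0. -/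
/-- For `R₀ ≤ 1`, the derivative of the Lyapunov function
`V(S,I) = S − A/μ − (A/μ) log(μS/A) + I` along the SIR vector field satisfies, for all
`S > 0` and `I ≥ 0`,
`(1 − A/(μS))(A − βSI − μS) + (βSI − (q+μ)I) = −μ(S − A/μ)²/S + (q+μ)(R₀ − 1)I ≤ 0`. -/
theorem sir_lyapunov_dfe (A β μ q : ℝ) (hA : 0 < A) (hβ : 0 < β) (hμ : 0 < μ) (hq : 0 < q)
    (R₀ : ℝ) (hR : R₀ = A * β / (μ * (q + μ))) (hR1 : R₀ ≤ 1) :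
    ∀ S I : ℝ, 0 < S → 0 ≤ I →
      (1 - A / (μ * S)) * (A - β * S * I - μ * S) + (β * S * I - (q + μ) * I)
        = -(μ * (S - A / μ) ^ 2 / S) + (q + μ) * (R₀ - 1) * I ∧
      (1 - A / (μ * S)) * (A - β * S * I - μ * S) + (β * S * I - (q + μ) * I) ≤ 0 := by
  intro S I hS hI
  have hμS : μ * S ≠ 0 := by positivity
  have hqμ : 0 < q + μ := by linarith
  have heq : (1 - A / (μ * S)) * (A - β * S * I - μ * S) + (β * S * I - (q + μ) * I)
      = -(μ * (S - A / μ) ^ 2 / S) + (q + μ) * (R₀ - 1) * I := by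
    subst hR
    field_simp
    ring
  refine ⟨heq, heq ▸ ?_⟩
  have h1 : 0 ≤ μ * (S - A / μ) ^ 2 / S := by positivity
  have h2 : (q + μ) * (R₀ - 1) * I ≤ 0 := by
    apply mul_nonpos_of_nonpos_of_nonneg _ hI
    exact mul_nonpos_of_nonneg_of_nonpos hqμ.le (by linarith)
  linarith
end

section
/- Suppose R₀ = 1, i.e., Aβ = μ(q+μ), and define φ(I) = A/μ − (Aβ/μ²)I. Then the invariance defect of the graph S = φ(I) under the SIR vector field, namely D(I) = (A − βφ(I)I − μφ(I)) − φ′(I)·(βφ(I)I − (q+μ)I), is a polynomial in I divisible by I²; explicitly D(I) = (Aβ²/μ² − A²β³/μ⁴)I². Hence the graph of φ approximates the center manifold of E₀ = (A/μ, 0) to second order. -/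
/-- Suppose `R₀ = 1`, i.e. `Aβ = μ(q+μ)`, and let
`φ(I) = A/μ − (Aβ/μ²)I`. The invariance defect of the graph `S = φ(I)` under the SIR vector
field, `D(I) = (A − βφ(I)I − μφ(I)) − φ′(I)(βφ(I)I − (q+μ)I)`, equals
`(Aβ²/μ² − A²β³/μ⁴)I²`; in particular it is divisible by `I²`, so the graph of `φ`
approximates the center manifold of `E₀` to second order. -/
theorem sir_center_manifold_defect (A β μ q : ℝ)
    (hA : 0 < A) (hβ : 0 < β) (hμ : 0 < μ) (hq : 0 < q)
    (hcrit : A * β = μ * (q + μ))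
    (φ : ℝ → ℝ) (hφ : φ = fun I => A / μ - A * β / μ ^ 2 * I)
    (D : ℝ → ℝ)
    (hD : D = fun I => (A - β * φ I * I - μ * φ I)
      - deriv φ I * (β * φ I * I - (q + μ) * I)) :
    (∀ I : ℝ, D I = (A * β ^ 2 / μ ^ 2 - A ^ 2 * β ^ 3 / μ ^ 4) * I ^ 2) ∧
    ∃ c : ℝ, ∀ I : ℝ, D I = c * I ^ 2 := by
  have hμ0 : (μ : ℝ) ≠ 0 := hμ.ne'
  have hderiv : ∀ I : ℝ, deriv φ I = -(A * β / μ ^ 2) := by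
    intro I
    rw [hφ]
    have : deriv (fun I : ℝ => A / μ - A * β / μ ^ 2 * I) I
        = deriv (fun I : ℝ => A / μ) I - deriv (fun I : ℝ => A * β / μ ^ 2 * I) I := by
      apply deriv_sub (differentiableAt_const _)
      exact (differentiableAt_id.const_mul _)
    rw [this, deriv_const, deriv_const_mul _ differentiableAt_id, deriv_id'']
    ring
  have key : ∀ I : ℝ, D I = (A * β ^ 2 / μ ^ 2 - A ^ 2 * β ^ 3 / μ ^ 4) * I ^ 2 := by
    intro I
    rw [hD]
    simp only [hderiv]
    simp only [hφ]
    have hq' : q + μ = A * β / μ := by field_simp; linarith [hcrit]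
    rw [hq']
    field_simp
    ring
  exact ⟨key, _, key⟩
end

section
/- Let S, I : [0, ∞) → ℝ be differentiable functions solving the planar SIR system with initial values S(0) > 0 and I(0) > 0. Then S(t) > 0 and I(t) > 0 for all t ≥ 0; that is, the open positive quadrant is positively invariant. -/
/-!
Both equations are linear in the unknown once the other component is regarded as a given
continuous coefficient: `İ = (βS − (q+μ)) I` and `Ṡ = A − (βI + μ) S`. A solution of
`ḟ = a + c f` with `a ≥ 0` satisfies `(f e^{−∫c})' = a e^{−∫c} ≥ 0`, so `f e^{−∫c}` never drops
below its positive initial value.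
-/

open Set

theorem exists_hasDerivAt_of_continuousOn_Ici {c : ℝ → ℝ} {t₀ : ℝ}
    (hc : ContinuousOn c (Ici t₀)) : ∃ F : ℝ → ℝ, ∀ t ≥ t₀, HasDerivAt F (c t) t := by
  have hext : Continuous fun t => c (max t t₀) :=
    hc.comp_continuous (continuous_id.max continuous_const) fun t => le_max_right t t₀
  refine ⟨fun t => ∫ s in t₀..t, c (max s t₀), fun t ht => ?_⟩
  simpa [max_eq_left ht] using (hext.integral_hasStrictDerivAt t₀ t).hasDerivAt

theorem pos_of_hasDerivAt_add_mul {f a c : ℝ → ℝ} {t₀ : ℝ} (hc : ContinuousOn c (Ici t₀))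
    (ha : ∀ t ≥ t₀, 0 ≤ a t) (hf : ∀ t ≥ t₀, HasDerivAt f (a t + c t * f t) t)
    (hf₀ : 0 < f t₀) : ∀ t ≥ t₀, 0 < f t := by
  obtain ⟨F, hF⟩ := exists_hasDerivAt_of_continuousOn_Ici hc
  set g : ℝ → ℝ := fun t => f t * Real.exp (-F t)
  have hg : ∀ t ≥ t₀, HasDerivAt g (a t * Real.exp (-F t)) t := fun t ht =>
    ((hf t ht).mul (hF t ht).neg.exp).congr_deriv (by simp only [Pi.neg_apply]; ring)
  have hg_mono : MonotoneOn g (Ici t₀) :=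
    monotoneOn_of_hasDerivWithinAt_nonneg (convex_Ici t₀)
      (fun t ht => (hg t ht).continuousAt.continuousWithinAt)
      (fun t ht => (hg t (interior_subset ht)).hasDerivWithinAt)
      fun t ht => mul_nonneg (ha t (interior_subset ht)) (Real.exp_pos _).le
  intro t ht
  have hgt : 0 < g t :=
    calc 0 < g t₀ := mul_pos hf₀ (Real.exp_pos _)
      _ ≤ g t := hg_mono (le_refl t₀) ht ht
  exact pos_of_mul_pos_left hgt (Real.exp_pos _).le

theorem sir_positive_invariance_general (A β μ q : ℝ)
    (hA : 0 < A)
    (S I : ℝ → ℝ)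
    (hS : ∀ t ≥ (0 : ℝ), HasDerivAt S (A - β * S t * I t - μ * S t) t)
    (hI : ∀ t ≥ (0 : ℝ), HasDerivAt I (β * S t * I t - (q + μ) * I t) t)
    (hS0 : 0 < S 0) (hI0 : 0 < I 0) :
    ∀ t ≥ (0 : ℝ), 0 < S t ∧ 0 < I t := by
  have hS_cont : ContinuousOn S (Ici 0) := fun t ht => (hS t ht).continuousAt.continuousWithinAt
  have hI_cont : ContinuousOn I (Ici 0) := fun t ht => (hI t ht).continuousAt.continuousWithinAt
  have hS_pos : ∀ t ≥ (0 : ℝ), 0 < S t :=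
    pos_of_hasDerivAt_add_mul (a := fun _ => A) (c := fun t => -(β * I t + μ))
      (by fun_prop) (fun _ _ => hA.le)
      (fun t ht => (hS t ht).congr_deriv (by ring)) hS0
  have hI_pos : ∀ t ≥ (0 : ℝ), 0 < I t :=
    pos_of_hasDerivAt_add_mul (a := fun _ => 0) (c := fun t => β * S t - (q + μ))
      (by fun_prop) (fun _ _ => le_rfl)
      (fun t ht => (hI t ht).congr_deriv (by ring)) hI0
  exact fun t ht => ⟨hS_pos t ht, hI_pos t ht⟩

/-- For a solution of the planar SIR system
`Ṡ = A − βSI − μS`, `İ = βSI − (q+μ)I` (positive parameters) with `S(0) > 0`, `I(0) > 0`,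
we have `S(t) > 0` and `I(t) > 0` for all `t ≥ 0`: the open positive quadrant is
positively invariant. -/
theorem sir_positive_invariance (A β μ q : ℝ)
    (hA : 0 < A) (hβ : 0 < β) (hμ : 0 < μ) (hq : 0 < q)
    (S I : ℝ → ℝ)
    (hS : ∀ t ≥ (0 : ℝ), HasDerivAt S (A - β * S t * I t - μ * S t) t)
    (hI : ∀ t ≥ (0 : ℝ), HasDerivAt I (β * S t * I t - (q + μ) * I t) t)
    (hS0 : 0 < S 0) (hI0 : 0 < I 0) :
    ∀ t ≥ (0 : ℝ), 0 < S t ∧ 0 < I t :=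
  sir_positive_invariance_general A β μ q hA S I hS hI hS0 hI0
end

section
/- Let S, I : [0, ∞) → ℝ be differentiable functions solving the planar SIR system with S(0) > 0 and I(0) > 0. Then for all t ≥ 0, S(t) + I(t) ≤ max(S(0) + I(0), A/μ); in particular the solution is bounded and no trajectory starting in the open positive quadrant escapes to infinity in forward time. -/
/-!
The infected class solves the linear equation `I' = (β S - (q + μ)) I`, so `I · exp (-∫ (β S - q - μ))`
is constant and `I` stays positive. The total population `N = S + I` then satisfies
`N' = A - μ N - q I ≤ A - μ N`, hence `(N - A / μ) · exp (μ t)` is nonincreasing.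
-/

open Real Set

theorem pos_of_hasDerivAt_eq_mul_self {x k : ℝ → ℝ} (hk : ContinuousOn k (Ici 0))
    (hx : ∀ t ≥ (0 : ℝ), HasDerivAt x (k t * x t) t) (hx0 : 0 < x 0) :
    ∀ t ≥ (0 : ℝ), 0 < x t := by
  -- Extending `k` by `k 0` to the left gives a continuous function, hence an everywhere
  -- differentiable primitive `K`.
  set k₀ : ℝ → ℝ := fun u => k (max u 0)
  have hk₀ : Continuous k₀ :=
    hk.comp_continuous (continuous_id.max continuous_const) fun u => le_max_right u 0
  set K : ℝ → ℝ := fun t => ∫ u in (0 : ℝ)..t, k₀ u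
  have hK (t : ℝ) : HasDerivAt K (k₀ t) t := (hk₀.integral_hasStrictDerivAt 0 t).hasDerivAt
  have hderiv : ∀ u ≥ (0 : ℝ), HasDerivAt (fun v => x v * exp (-K v)) 0 u := by
    intro u hu
    have h : HasDerivAt (fun v => x v * exp (-K v))
        (k u * x u * exp (-K u) + x u * (exp (-K u) * -k₀ u)) u := (hx u hu).mul (hK u).neg.exp
    convert h using 1
    simp only [k₀, max_eq_left hu]
    ring
  intro t ht
  have hconst : x t * exp (-K t) = x 0 * exp (-K 0) :=
    constant_of_has_deriv_right_zero
      (fun u hu => (hderiv u hu.1).continuousAt.continuousWithinAt)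
      (fun u hu => (hderiv u hu.1).hasDerivWithinAt) t ⟨ht, le_rfl⟩
  have hprod : 0 < x t * exp (-K t) := by
    rw [hconst]
    positivity
  exact (pos_iff_pos_of_mul_pos hprod).2 (exp_pos _)

theorem le_max_of_hasDerivAt_le_sub_mul {N N' : ℝ → ℝ} {A μ : ℝ} (hμ : 0 < μ)
    (hN : ∀ t ≥ (0 : ℝ), HasDerivAt N (N' t) t) (hN' : ∀ t ≥ (0 : ℝ), N' t ≤ A - μ * N t) :
    ∀ t ≥ (0 : ℝ), N t ≤ max (N 0) (A / μ) := by
  set f : ℝ → ℝ := fun u => (N u - A / μ) * exp (μ * u)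
  set f' : ℝ → ℝ := fun u => (N' u + μ * N u - A) * exp (μ * u)
  have hf : ∀ u ≥ (0 : ℝ), HasDerivAt f (f' u) u := by
    intro u hu
    have hexp : HasDerivAt (fun v => exp (μ * v)) (exp (μ * u) * (μ * 1)) u :=
      ((hasDerivAt_id u).const_mul μ).exp
    have h : HasDerivAt f (N' u * exp (μ * u) + (N u - A / μ) * (exp (μ * u) * (μ * 1))) u :=
      ((hN u hu).sub_const (A / μ)).mul hexp
    convert h using 1
    field_simp
    ring
  have hanti : AntitoneOn f (Ici 0) := by
    refine antitoneOn_of_hasDerivWithinAt_nonpos (f' := f') (convex_Ici 0)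
      (fun u hu => (hf u hu).continuousAt.continuousWithinAt) (fun u hu => ?_) fun u hu => ?_
    all_goals rw [interior_Ici] at hu
    · exact (hf u (le_of_lt hu)).hasDerivWithinAt
    · exact mul_nonpos_of_nonpos_of_nonneg (by linarith [hN' u (le_of_lt hu)]) (exp_pos _).le
  intro t ht
  have hft : (N t - A / μ) * exp (μ * t) ≤ N 0 - A / μ := by
    simpa [f] using hanti self_mem_Ici ht ht
  have hexp : 1 ≤ exp (μ * t) := one_le_exp (by positivity)
  rcases le_or_gt (N t) (A / μ) with hle | hgt
  · exact le_max_of_le_right hle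
  · have hscale : N t - A / μ ≤ (N t - A / μ) * exp (μ * t) :=
      le_mul_of_one_le_right (sub_nonneg.2 hgt.le) hexp
    exact le_max_of_le_left (by linarith)

theorem sir_boundedness_general (A β μ q : ℝ)
    (hμ : 0 < μ) (hq : 0 < q)
    (S I : ℝ → ℝ)
    (hS : ∀ t ≥ (0 : ℝ), HasDerivAt S (A - β * S t * I t - μ * S t) t)
    (hI : ∀ t ≥ (0 : ℝ), HasDerivAt I (β * S t * I t - (q + μ) * I t) t)
    (hI0 : 0 < I 0) :
    ∀ t ≥ (0 : ℝ), S t + I t ≤ max (S 0 + I 0) (A / μ) := by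
  have hrate : ContinuousOn (fun t => β * S t - (q + μ)) (Ici 0) := fun t ht =>
    ((continuousAt_const.mul (hS t ht).continuousAt).sub continuousAt_const).continuousWithinAt
  have hIpos : ∀ t ≥ (0 : ℝ), 0 < I t :=
    pos_of_hasDerivAt_eq_mul_self hrate
      (fun t ht => by convert hI t ht using 1; ring) hI0
  exact le_max_of_hasDerivAt_le_sub_mul hμ (fun t ht => (hS t ht).add (hI t ht))
    fun t ht => by nlinarith [hIpos t ht]

/-- For a solution of the planar SIR system with `S(0) > 0`, `I(0) > 0`,
we have `S(t) + I(t) ≤ max(S(0) + I(0), A/μ)` for all `t ≥ 0`; in particular the solution is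
bounded and no forward trajectory from the open positive quadrant escapes to infinity. -/
theorem sir_boundedness (A β μ q : ℝ)
    (hA : 0 < A) (hβ : 0 < β) (hμ : 0 < μ) (hq : 0 < q)
    (S I : ℝ → ℝ)
    (hS : ∀ t ≥ (0 : ℝ), HasDerivAt S (A - β * S t * I t - μ * S t) t)
    (hI : ∀ t ≥ (0 : ℝ), HasDerivAt I (β * S t * I t - (q + μ) * I t) t)
    (hS0 : 0 < S 0) (hI0 : 0 < I 0) :
    ∀ t ≥ (0 : ℝ), S t + I t ≤ max (S 0 + I 0) (A / μ) :=
  sir_boundedness_general A β μ q hμ hq S I hS hI hI0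
end

section
/- Suppose R₀ > 1. Let S, I : [0, ∞) → ℝ be differentiable functions solving the planar SIR system with S(0) > 0 and I(0) > 0. Then (S(t), I(t)) converges as t → ∞ to the endemic equilibrium E* = ((q+μ)/β, (μ/β)(R₀ − 1)); that is, E* is globally asymptotically stable in the open positive quadrant. -/
/-!
Solutions stay positive and in a compact box `[δ, M] × [0, M]` with `δ > 0`. Along them the
Volterra-type Lyapunov function `V = (S - S* log S) + (I - I* log I)` satisfies
`V' = -(μ + β I*) (S - S*)² / S ≤ 0`, so `V` converges. By Barbalat's lemma `V' → 0`, whence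
`S → S*`. Barbalat's lemma applied to `S` gives `S' → 0`, and then the `S`-equation solved for `I`,
`I = (A - μ S - S') / (β S)`, tends to `I*`.
-/

open Set Filter Topology

lemma monotoneOn_Ici_of_hasDerivAt_nonneg {a : ℝ} {f f' : ℝ → ℝ}
    (hf : ∀ t ≥ a, HasDerivAt f (f' t) t) (hf' : ∀ t ≥ a, 0 ≤ f' t) : MonotoneOn f (Ici a) :=
  monotoneOn_of_hasDerivWithinAt_nonneg (convex_Ici a)
    (fun t ht => (hf t ht).continuousAt.continuousWithinAt)
    (fun t ht => (hf t (interior_subset ht)).hasDerivWithinAt)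
    (fun t ht => hf' t (interior_subset ht))

lemma antitoneOn_Ici_of_hasDerivAt_nonpos {a : ℝ} {f f' : ℝ → ℝ}
    (hf : ∀ t ≥ a, HasDerivAt f (f' t) t) (hf' : ∀ t ≥ a, f' t ≤ 0) : AntitoneOn f (Ici a) :=
  antitoneOn_of_hasDerivWithinAt_nonpos (convex_Ici a)
    (fun t ht => (hf t ht).continuousAt.continuousWithinAt)
    (fun t ht => (hf t (interior_subset ht)).hasDerivWithinAt)
    (fun t ht => hf' t (interior_subset ht))

lemma continuous_comp_max_of_hasDerivAt {a : ℝ} {f f' : ℝ → ℝ}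
    (hf : ∀ t ≥ a, HasDerivAt f (f' t) t) : Continuous fun t => f (max t a) :=
  ContinuousOn.comp_continuous (s := Ici a)
    (fun t ht => (hf t ht).continuousAt.continuousWithinAt)
    (continuous_id.max continuous_const) (fun _ => mem_Ici.2 (le_max_right _ _))

lemma exists_tendsto_of_antitoneOn_Ici {a m : ℝ} {f : ℝ → ℝ} (hf : AntitoneOn f (Ici a))
    (hm : ∀ t ≥ a, m ≤ f t) : ∃ L, Tendsto f atTop (𝓝 L) := by
  have hanti : Antitone fun t => f (max t a) := fun s t hst =>
    hf (le_max_right s a) (le_max_right t a) (max_le_max_right a hst)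
  refine ⟨_, (tendsto_atTop_ciInf hanti ⟨m, ?_⟩).congr' ?_⟩
  · rintro _ ⟨t, rfl⟩
    exact hm _ (le_max_right t a)
  · filter_upwards [eventually_ge_atTop a] with t ht
    rw [max_eq_left ht]

/-- Barbalat's lemma. -/
lemma tendsto_deriv_zero_of_tendsto {a L C : ℝ} {f f' f'' : ℝ → ℝ}
    (hf : ∀ t ≥ a, HasDerivAt f (f' t) t) (hf' : ∀ t ≥ a, HasDerivAt f' (f'' t) t)
    (hC : ∀ t ≥ a, |f'' t| ≤ C) (hL : Tendsto f atTop (𝓝 L)) :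
    Tendsto f' atTop (𝓝 0) := by
  have hLip : ∀ t ≥ a, ∀ u ≥ t, |f' u - f' t| ≤ C * (u - t) := by
    intro t ht u hu
    have := (convex_Ici a).norm_image_sub_le_of_norm_hasDerivWithin_le
      (fun x hx => (hf' x hx).hasDerivWithinAt) hC (mem_Ici.2 ht) (mem_Ici.2 (ht.trans hu))
    rwa [Real.norm_eq_abs, Real.norm_eq_abs, abs_of_nonneg (sub_nonneg.2 hu)] at this
  rw [Metric.tendsto_atTop]
  intro ε hε
  -- On `[t, t + η]` the derivative varies by at most `ε / 2`, while `f` varies by less than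
  -- `ε η / 2`; by the mean value theorem this forces `|f' t| < ε`.
  set η := ε / (2 * (|C| + 1)) with hη_def
  have hη : 0 < η := by positivity
  have hCη : C * η ≤ ε / 2 := by
    calc C * η ≤ (|C| + 1) * η := by gcongr; linarith [le_abs_self C]
      _ = ε / 2 := by rw [hη_def]; field_simp
  obtain ⟨N, hN⟩ := Metric.tendsto_atTop.1 hL (ε * η / 4) (by positivity)
  refine ⟨max N a, fun t ht => ?_⟩
  have htN : N ≤ t := le_of_max_le_left ht
  have hta : a ≤ t := le_of_max_le_right ht
  obtain ⟨ξ, hξ, hslope⟩ := exists_hasDerivAt_eq_slope f f' (lt_add_of_pos_right t hη)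
    (fun x hx => (hf x (hta.trans hx.1)).continuousAt.continuousWithinAt)
    (fun x hx => hf x (hta.trans hx.1.le))
  have hfξ : |f' ξ| < ε / 2 := by
    have h1 := hN t htN
    have h2 := hN (t + η) (by linarith)
    rw [Real.dist_eq, abs_lt] at h1 h2
    have hdiff : |f (t + η) - f t| < ε / 2 * η := abs_sub_lt_iff.2 ⟨by linarith, by linarith⟩
    rwa [hslope, add_sub_cancel_left, abs_div, abs_of_pos hη, div_lt_iff₀ hη]
  have hξη : |f' ξ - f' t| ≤ ε / 2 := by
    have : 0 ≤ C := (abs_nonneg _).trans (hC t hta)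
    calc |f' ξ - f' t| ≤ C * (ξ - t) := hLip t hta ξ hξ.1.le
      _ ≤ C * η := by gcongr; linarith [hξ.2]
      _ ≤ ε / 2 := hCη
  rw [Real.dist_eq, sub_zero]
  linarith [abs_sub_abs_le_abs_sub (f' t) (f' ξ), abs_sub_comm (f' t) (f' ξ)]

lemma pos_of_hasDerivAt_ge_mul {f f' g : ℝ → ℝ} (hg : Continuous g)
    (hf : ∀ t ≥ (0 : ℝ), HasDerivAt f (f' t) t) (hfg : ∀ t ≥ (0 : ℝ), g t * f t ≤ f' t)
    (h0 : 0 < f 0) : ∀ t ≥ (0 : ℝ), 0 < f t := by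
  set G : ℝ → ℝ := fun u => ∫ x in (0 : ℝ)..u, g x
  have hG : ∀ t, HasDerivAt G (g t) t := fun t =>
    intervalIntegral.integral_hasDerivAt_right (hg.intervalIntegrable _ _)
      hg.aestronglyMeasurable.stronglyMeasurableAtFilter hg.continuousAt
  have hmono : MonotoneOn (fun t => f t * Real.exp (-G t)) (Ici 0) := by
    refine monotoneOn_Ici_of_hasDerivAt_nonneg
      (fun t ht => ((hf t ht).mul (hG t).neg.exp).congr_deriv
        (by simp only [Pi.neg_apply]; ring : _ = (f' t - g t * f t) * Real.exp (-G t)))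
      (fun t ht => mul_nonneg (sub_nonneg.2 (hfg t ht)) (Real.exp_pos _).le)
  intro t ht
  have h := hmono self_mem_Ici ht ht
  simp only [G, intervalIntegral.integral_same, neg_zero, Real.exp_zero, mul_one] at h
  exact pos_of_mul_pos_left (h0.trans_le h) (Real.exp_pos _).le

lemma le_max_of_hasDerivAt_le_sub_mul_s17 {f f' : ℝ → ℝ} {k c : ℝ} (hk : 0 < k)
    (hf : ∀ t ≥ (0 : ℝ), HasDerivAt f (f' t) t) (hf' : ∀ t ≥ (0 : ℝ), f' t ≤ c - k * f t) :
    ∀ t ≥ (0 : ℝ), f t ≤ max (f 0) (c / k) := by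
  have hanti : AntitoneOn (fun t => (f t - c / k) * Real.exp (k * t)) (Ici 0) := by
    refine antitoneOn_Ici_of_hasDerivAt_nonpos
      (f' := fun t => (f' t - (c - k * f t)) * Real.exp (k * t)) (fun t ht => ?_) (fun t ht => ?_)
    · exact (((hf t ht).sub_const _).mul ((hasDerivAt_id t).const_mul k).exp).congr_deriv
        (by simp only [id, mul_one]; field_simp; ring)
    · exact mul_nonpos_of_nonpos_of_nonneg (by linarith [hf' t ht]) (Real.exp_pos _).le
  intro t ht
  have h := hanti self_mem_Ici ht ht
  simp only [mul_zero, Real.exp_zero, mul_one] at h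
  have h1 : 1 ≤ Real.exp (k * t) := Real.one_le_exp (by positivity)
  rcases le_total (f t) (c / k) with hle | hge
  · exact hle.trans (le_max_right _ _)
  · exact le_max_of_le_left (by nlinarith)

lemma min_le_of_hasDerivAt_ge_sub_mul {f f' : ℝ → ℝ} {k c : ℝ} (hk : 0 < k)
    (hf : ∀ t ≥ (0 : ℝ), HasDerivAt f (f' t) t) (hf' : ∀ t ≥ (0 : ℝ), c - k * f t ≤ f' t) :
    ∀ t ≥ (0 : ℝ), min (f 0) (c / k) ≤ f t := by
  intro t ht
  have h := le_max_of_hasDerivAt_le_sub_mul_s17 hk (fun t ht => (hf t ht).neg)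
    (fun t ht => by linarith [hf' t ht] : ∀ t ≥ (0 : ℝ), -f' t ≤ -c - k * -f t) t ht
  simp only [Pi.neg_apply, neg_div, le_max_iff, neg_le_neg_iff] at h
  exact h.elim min_le_of_left_le min_le_of_right_le

lemma self_sub_mul_log_le {a x : ℝ} (ha : 0 < a) (hx : 0 < x) :
    a - a * Real.log a ≤ x - a * Real.log x := by
  have h := Real.log_le_sub_one_of_pos (div_pos hx ha)
  rw [Real.log_div hx.ne' ha.ne'] at h
  have := mul_le_mul_of_nonneg_left h ha.le
  have hxa : a * (x / a) = x := by field_simp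
  rw [mul_sub, mul_sub, hxa] at this
  linarith

lemma tendsto_of_tendsto_sq_sub_div {f : ℝ → ℝ} {s M : ℝ} (hf : ∀ᶠ t in atTop, 0 < f t ∧ f t ≤ M)
    (h : Tendsto (fun t => (f t - s) ^ 2 / f t) atTop (𝓝 0)) : Tendsto f atTop (𝓝 s) := by
  have hsq : Tendsto (fun t => (f t - s) ^ 2) atTop (𝓝 0) := by
    refine tendsto_of_tendsto_of_tendsto_of_le_of_le' tendsto_const_nhds
      (by simpa using h.const_mul M) (Eventually.of_forall fun t => sq_nonneg _) ?_
    filter_upwards [hf] with t ⟨hpos, hle⟩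
    rw [mul_div_assoc', le_div_iff₀ hpos, mul_comm M]
    exact mul_le_mul_of_nonneg_left hle (sq_nonneg _)
  rw [tendsto_iff_norm_sub_tendsto_zero]
  simpa [Real.sqrt_sq_eq_abs] using hsq.sqrt

structure IsSIRSolution (A β μ q : ℝ) (S I : ℝ → ℝ) : Prop where
  hasDerivAt_S : ∀ t ≥ (0 : ℝ), HasDerivAt S (A - β * S t * I t - μ * S t) t
  hasDerivAt_I : ∀ t ≥ (0 : ℝ), HasDerivAt I (β * S t * I t - (q + μ) * I t) t

namespace IsSIRSolution

variable {A β μ q s i δ M : ℝ} {S I : ℝ → ℝ}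

lemma pos (h : IsSIRSolution A β μ q S I) (hA : 0 ≤ A) (hS0 : 0 < S 0) (hI0 : 0 < I 0) :
    ∀ t ≥ (0 : ℝ), 0 < S t ∧ 0 < I t := by
  have hIpos := pos_of_hasDerivAt_ge_mul (g := fun t => β * S (max t 0) - (q + μ))
    ((continuous_const.mul (continuous_comp_max_of_hasDerivAt h.hasDerivAt_S)).sub continuous_const)
    h.hasDerivAt_I (fun t ht => by rw [max_eq_left ht, sub_mul]) hI0
  have hSpos := pos_of_hasDerivAt_ge_mul (g := fun t => -(β * I (max t 0) + μ))
    ((continuous_const.mul (continuous_comp_max_of_hasDerivAt h.hasDerivAt_I)).add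
      continuous_const).neg
    h.hasDerivAt_S (fun t ht => by rw [max_eq_left ht]; linarith) hS0
  exact fun t ht => ⟨hSpos t ht, hIpos t ht⟩

lemma exists_mem_box (h : IsSIRSolution A β μ q S I) (hA : 0 < A) (hβ : 0 < β) (hμ : 0 < μ)
    (hq : 0 ≤ q) (hpos : ∀ t ≥ (0 : ℝ), 0 < S t ∧ 0 < I t) :
    ∃ δ M, 0 < δ ∧ ∀ t ≥ (0 : ℝ), (S t, I t) ∈ Icc δ M ×ˢ Icc 0 M := by
  set M := max (S 0 + I 0) (A / μ)
  have hM : 0 < M := (div_pos hA hμ).trans_le (le_max_right _ _)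
  have hN : ∀ t ≥ (0 : ℝ), S t + I t ≤ M :=
    le_max_of_hasDerivAt_le_sub_mul_s17 hμ
      (fun t ht => (h.hasDerivAt_S t ht).add (h.hasDerivAt_I t ht))
      fun t ht => by nlinarith [(hpos t ht).2]
  have hIM : ∀ t ≥ (0 : ℝ), I t ≤ M := fun t ht => by linarith [hN t ht, (hpos t ht).1]
  have hδ := min_le_of_hasDerivAt_ge_sub_mul (k := β * M + μ) (c := A) (by positivity)
    h.hasDerivAt_S fun t ht => by
      nlinarith [mul_nonneg (mul_nonneg hβ.le (hpos t ht).1.le) (sub_nonneg.2 (hIM t ht))]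
  refine ⟨_, M, lt_min (hpos 0 le_rfl).1 (by positivity), fun t ht =>
    ⟨⟨hδ t ht, by linarith [hN t ht, (hpos t ht).2]⟩, (hpos t ht).2.le, hIM t ht⟩⟩

lemma hasDerivAt_lyapunov (h : IsSIRSolution A β μ q S I) (hs : β * s = q + μ)
    (hi : A = β * s * i + μ * s) {t : ℝ} (ht : 0 ≤ t) (hSt : 0 < S t) (hIt : 0 < I t) :
    HasDerivAt (fun u => S u - s * Real.log (S u) + (I u - i * Real.log (I u)))
      (-(μ + β * i) * ((S t - s) ^ 2 / S t)) t := by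
  have hS := h.hasDerivAt_S t ht
  have hI := h.hasDerivAt_I t ht
  refine ((hS.sub ((hS.log hSt.ne').const_mul s)).add
    (hI.sub ((hI.log hIt.ne').const_mul i))).congr_deriv ?_
  rw [hi, ← hs]
  field_simp
  ring

lemma exists_tendsto_lyapunov (h : IsSIRSolution A β μ q S I) (hβ : 0 ≤ β) (hμ : 0 ≤ μ)
    (hs0 : 0 < s) (hi0 : 0 < i) (hs : β * s = q + μ) (hi : A = β * s * i + μ * s)
    (hpos : ∀ t ≥ (0 : ℝ), 0 < S t ∧ 0 < I t) :
    ∃ L, Tendsto (fun u => S u - s * Real.log (S u) + (I u - i * Real.log (I u))) atTop (𝓝 L) := by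
  refine exists_tendsto_of_antitoneOn_Ici (antitoneOn_Ici_of_hasDerivAt_nonpos
    (fun t ht => h.hasDerivAt_lyapunov hs hi ht (hpos t ht).1 (hpos t ht).2) fun t ht => ?_)
    fun t ht => add_le_add (self_sub_mul_log_le hs0 (hpos t ht).1)
      (self_sub_mul_log_le hi0 (hpos t ht).2)
  have := (hpos t ht).1
  have : 0 ≤ (μ + β * i) * ((S t - s) ^ 2 / S t) := by positivity
  linarith

lemma tendsto_S (h : IsSIRSolution A β μ q S I) (hβ : 0 < β) (hμ : 0 ≤ μ) (hs0 : 0 < s)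
    (hi0 : 0 < i) (hs : β * s = q + μ) (hi : A = β * s * i + μ * s) (hδ : 0 < δ)
    (hbox : ∀ t ≥ (0 : ℝ), (S t, I t) ∈ Icc δ M ×ˢ Icc 0 M) (hIpos : ∀ t ≥ (0 : ℝ), 0 < I t) :
    Tendsto S atTop (𝓝 s) := by
  have hSpos : ∀ t ≥ (0 : ℝ), 0 < S t := fun t ht => hδ.trans_le (hbox t ht).1.1
  have hk : 0 < μ + β * i := by positivity
  obtain ⟨L, hL⟩ :=
    h.exists_tendsto_lyapunov hβ.le hμ hs0 hi0 hs hi fun t ht => ⟨hSpos t ht, hIpos t ht⟩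
  set d2V : ℝ × ℝ → ℝ := fun p =>
    -(μ + β * i) * ((p.1 ^ 2 - s ^ 2) / p.1 ^ 2 * (A - β * p.1 * p.2 - μ * p.1))
  have hd2V : ContinuousOn d2V (Icc δ M ×ˢ Icc 0 M) :=
    continuousOn_const.mul (((by fun_prop : Continuous fun p : ℝ × ℝ => p.1 ^ 2 - s ^ 2)
      |>.continuousOn.div (by fun_prop : Continuous fun p : ℝ × ℝ => p.1 ^ 2).continuousOn
      fun p hp => pow_ne_zero 2 (hδ.trans_le hp.1.1).ne').mul (by fun_prop))
  have hV' : ∀ t ≥ (0 : ℝ),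
      HasDerivAt (fun u => -(μ + β * i) * ((S u - s) ^ 2 / S u)) (d2V (S t, I t)) t := by
    intro t ht
    have hS := h.hasDerivAt_S t ht
    exact ((((hS.sub_const s).pow 2).div hS (hSpos t ht).ne').const_mul _).congr_deriv
      (by simp only [d2V, Pi.pow_apply]; field_simp; ring)
  obtain ⟨C, hC⟩ := (isCompact_Icc.prod isCompact_Icc).exists_bound_of_continuousOn hd2V
  have hV'lim := tendsto_deriv_zero_of_tendsto
    (fun t ht => h.hasDerivAt_lyapunov hs hi ht (hSpos t ht) (hIpos t ht)) hV'
    (fun t ht => hC _ (hbox t ht)) hL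
  refine tendsto_of_tendsto_sq_sub_div (M := M) ?_ ?_
  · filter_upwards [eventually_ge_atTop 0] with t ht
    exact ⟨hSpos t ht, (hbox t ht).1.2⟩
  · have := hV'lim.div_const (-(μ + β * i))
    rw [zero_div] at this
    exact this.congr fun t => mul_div_cancel_left₀ _ (neg_ne_zero.2 hk.ne')

lemma tendsto_I (h : IsSIRSolution A β μ q S I) (hβ : 0 < β) (hs0 : 0 < s)
    (hi : A = β * s * i + μ * s) (hδ : 0 < δ)
    (hbox : ∀ t ≥ (0 : ℝ), (S t, I t) ∈ Icc δ M ×ˢ Icc 0 M) (hSs : Tendsto S atTop (𝓝 s)) :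
    Tendsto I atTop (𝓝 i) := by
  set d2S : ℝ × ℝ → ℝ := fun p => -(β * (A - β * p.1 * p.2 - μ * p.1) * p.2
    + β * p.1 * (β * p.1 * p.2 - (q + μ) * p.2)) - μ * (A - β * p.1 * p.2 - μ * p.1)
  have hS' : ∀ t ≥ (0 : ℝ),
      HasDerivAt (fun u => A - β * S u * I u - μ * S u) (d2S (S t, I t)) t := by
    intro t ht
    have hS := h.hasDerivAt_S t ht
    exact (((hasDerivAt_const t A).sub ((hS.const_mul β).mul (h.hasDerivAt_I t ht))).sub
      (hS.const_mul μ)).congr_deriv (by ring)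
  obtain ⟨C, hC⟩ := (isCompact_Icc.prod isCompact_Icc).exists_bound_of_continuousOn
    (by fun_prop : Continuous d2S).continuousOn
  have hS'lim :=
    tendsto_deriv_zero_of_tendsto h.hasDerivAt_S hS' (fun t ht => hC _ (hbox t ht)) hSs
  have hlim := ((tendsto_const_nhds (x := A)).sub (hSs.const_mul μ) |>.sub hS'lim).div
    (hSs.const_mul β) (by positivity)
  rw [show (A - μ * s - 0) / (β * s) = i by rw [hi]; field_simp; ring] at hlim
  refine hlim.congr' ?_
  filter_upwards [eventually_ge_atTop 0] with t ht
  rw [Pi.div_apply]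
  field_simp [(hδ.trans_le (hbox t ht).1.1).ne']
  ring

end IsSIRSolution

open Filter in
/-- Suppose `R₀ > 1`. Every solution of the planar SIR system with
`S(0) > 0`, `I(0) > 0` converges as `t → ∞` to the endemic equilibrium
`E* = ((q+μ)/β, (μ/β)(R₀ − 1))`: `E*` is globally asymptotically stable in the open
positive quadrant. -/
theorem sir_global_stability_endemic (A β μ q : ℝ)
    (hA : 0 < A) (hβ : 0 < β) (hμ : 0 < μ) (hq : 0 < q)
    (R₀ : ℝ) (hR : R₀ = A * β / (μ * (q + μ))) (hR1 : 1 < R₀)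
    (S I : ℝ → ℝ)
    (hS : ∀ t ≥ (0 : ℝ), HasDerivAt S (A - β * S t * I t - μ * S t) t)
    (hI : ∀ t ≥ (0 : ℝ), HasDerivAt I (β * S t * I t - (q + μ) * I t) t)
    (hS0 : 0 < S 0) (hI0 : 0 < I 0) :
    Tendsto (fun t => (S t, I t)) atTop (nhds ((q + μ) / β, μ / β * (R₀ - 1))) := by
  have hsol : IsSIRSolution A β μ q S I := ⟨hS, hI⟩
  have hs : β * ((q + μ) / β) = q + μ := mul_div_cancel₀ _ hβ.ne'
  have hi : A = β * ((q + μ) / β) * (μ / β * (R₀ - 1)) + μ * ((q + μ) / β) := by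
    rw [hR]; field_simp; ring
  have hi0 : 0 < μ / β * (R₀ - 1) := by have := sub_pos.2 hR1; positivity
  have hpos := hsol.pos hA.le hS0 hI0
  obtain ⟨δ, M, hδ, hbox⟩ := hsol.exists_mem_box hA hβ hμ hq.le hpos
  have hSlim := hsol.tendsto_S hβ hμ.le (by positivity) hi0 hs hi hδ hbox fun t ht => (hpos t ht).2
  exact hSlim.prodMk_nhds (hsol.tendsto_I hβ (by positivity) hi hδ hbox hSlim)
end

section
/- Suppose R₀ ≤ 1. Let S, I : [0, ∞) → ℝ be differentiable functions solving the planar SIR system with S(0) > 0 and I(0) > 0. Then S(t) → A/μ and I(t) → 0 as t → ∞; that is, the disease-free equilibrium E₀ = (A/μ, 0) is globally asymptotically stable in the open positive quadrant. -/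
/-!
Solutions stay positive, and when `R₀ ≤ 1` the quantity `V = I · exp (β S / μ)` is nonincreasing.
If `V` stayed above some `ε > 0`, then `I` would stay above some `δ > 0`; then
`S' ≤ A - (μ + β δ) S` pushes `S` eventually below `A / μ` by a fixed margin, which makes
`(log I)' = β S - (q + μ)` eventually negative and forces `I → 0`, a contradiction. Hence `V → 0`,
so `I ≤ V → 0`, and then `S' + μ S = A - β S I → A` gives `S → A / μ`.
-/

open Set Filter Topology Real

lemma monotoneOn_of_hasDerivAt_nonneg {D : Set ℝ} (hD : Convex ℝ D) {f f' : ℝ → ℝ}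
    (hf : ∀ x ∈ D, HasDerivAt f (f' x) x) (hf'₀ : ∀ x ∈ interior D, 0 ≤ f' x) :
    MonotoneOn f D :=
  monotoneOn_of_hasDerivWithinAt_nonneg hD (fun x hx => (hf x hx).continuousAt.continuousWithinAt)
    (fun x hx => (hf x (interior_subset hx)).hasDerivWithinAt) hf'₀

lemma antitoneOn_of_hasDerivAt_nonpos {D : Set ℝ} (hD : Convex ℝ D) {f f' : ℝ → ℝ}
    (hf : ∀ x ∈ D, HasDerivAt f (f' x) x) (hf'₀ : ∀ x ∈ interior D, f' x ≤ 0) :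
    AntitoneOn f D :=
  antitoneOn_of_hasDerivWithinAt_nonpos hD (fun x hx => (hf x hx).continuousAt.continuousWithinAt)
    (fun x hx => (hf x (interior_subset hx)).hasDerivWithinAt) hf'₀

theorem pos_of_mul_le_deriv {f f' c : ℝ → ℝ} {a : ℝ}
    (hf : ∀ t ≥ a, HasDerivAt f (f' t) t) (hc : ContinuousOn c (Ici a))
    (hle : ∀ t ≥ a, c t * f t ≤ f' t) (ha : 0 < f a) : ∀ t ≥ a, 0 < f t := by
  intro b hab
  by_contra! hfb
  set Z := Icc a b ∩ f ⁻¹' Iic 0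
  have hZ : IsClosed Z := ContinuousOn.preimage_isClosed_of_isClosed
    (fun t ht => (hf t ht.1).continuousAt.continuousWithinAt) isClosed_Icc isClosed_Iic
  have hZbdd : BddBelow Z := ⟨a, fun t ht => ht.1.1⟩
  set s := sInf Z
  have hs : s ∈ Z := hZ.csInf_mem ⟨b, ⟨hab, le_rfl⟩, hfb⟩ hZbdd
  have hpos : ∀ t ∈ Ico a s, 0 < f t := fun t ht => by
    by_contra! h
    exact ht.2.not_ge (csInf_le hZbdd ⟨⟨ht.1, ht.2.le.trans hs.1.2⟩, h⟩)
  obtain ⟨m, hm⟩ := isCompact_Icc.bddBelow_image (hc.mono (Icc_subset_Ici_self : Icc a s ⊆ Ici a))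
  -- `f ≥ 0` on `[a, s]`, so `f' ≥ m f` there and `f e^{-mt}` cannot decrease
  have hmono : MonotoneOn (fun t => f t * exp (-(m * t))) (Icc a s) := by
    refine monotoneOn_of_hasDerivAt_nonneg (convex_Icc a s)
      (f' := fun t => (f' t - m * f t) * exp (-(m * t))) (fun t ht => ?_) (fun t ht => ?_)
    · refine ((hf t ht.1).mul ((hasDerivAt_id' t).const_mul m).neg.exp).congr_deriv ?_
      simp only [Pi.neg_apply]; ring
    · rw [interior_Icc] at ht
      have hcm : m * f t ≤ c t * f t := mul_le_mul_of_nonneg_right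
        (hm ⟨t, Ioo_subset_Icc_self ht, rfl⟩) (hpos t (Ioo_subset_Ico_self ht)).le
      exact mul_nonneg (by linarith [hle t ht.1.le]) (exp_pos _).le
  have hfs : f s * exp (-(m * s)) ≤ 0 := mul_nonpos_of_nonpos_of_nonneg hs.2 (exp_pos _).le
  have := hmono ⟨le_rfl, hs.1.1⟩ ⟨hs.1.1, le_rfl⟩ hs.1.1
  nlinarith [mul_pos ha (exp_pos (-(m * a)))]

theorem le_of_deriv_le_sub_mul {f f' : ℝ → ℝ} {a k T t : ℝ} (hk : k ≠ 0) (hTt : T ≤ t)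
    (hf : ∀ u ∈ Icc T t, HasDerivAt f (f' u) u) (hle : ∀ u ∈ Icc T t, f' u ≤ a - k * f u) :
    f t ≤ a / k + (f T - a / k) * exp (-(k * (t - T))) := by
  have hanti : AntitoneOn (fun u => (f u - a / k) * exp (k * u)) (Icc T t) := by
    refine antitoneOn_of_hasDerivAt_nonpos (convex_Icc T t)
      (f' := fun u => (f' u + k * f u - a) * exp (k * u)) (fun u hu => ?_) (fun u hu => ?_)
    · refine (((hf u hu).sub_const (a / k)).mul
        ((hasDerivAt_id' u).const_mul k).exp).congr_deriv ?_
      field_simp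
      ring
    · exact mul_nonpos_of_nonpos_of_nonneg (by linarith [hle u (interior_subset hu)]) (exp_pos _).le
  have h := hanti ⟨le_rfl, hTt⟩ ⟨hTt, le_rfl⟩ hTt
  have hexp : exp (-(k * (t - T))) = exp (k * T) / exp (k * t) := by
    rw [← exp_sub]; ring_nf
  rw [hexp, ← mul_div_assoc, ← sub_le_iff_le_add', le_div_iff₀ (exp_pos _)]
  exact h

theorem le_max_of_deriv_le_sub_mul {f f' : ℝ → ℝ} {a k T : ℝ} (hk : 0 < k)
    (hf : ∀ u ≥ T, HasDerivAt f (f' u) u) (hle : ∀ u ≥ T, f' u ≤ a - k * f u) :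
    ∀ t ≥ T, f t ≤ max (f T) (a / k) := by
  intro t hTt
  have h := le_of_deriv_le_sub_mul hk.ne' hTt (fun u hu => hf u hu.1) (fun u hu => hle u hu.1)
  have he : exp (-(k * (t - T))) ≤ 1 := exp_le_one_iff.2 (by nlinarith)
  rcases le_total (f T) (a / k) with hfT | hfT
  · nlinarith [exp_pos (-(k * (t - T))), le_max_right (f T) (a / k)]
  · nlinarith [le_max_left (f T) (a / k)]

theorem eventually_lt_of_deriv_le_sub_mul {f f' : ℝ → ℝ} {a k b : ℝ} (hk : 0 < k)
    (hf : ∀ᶠ t in atTop, HasDerivAt f (f' t) t) (hle : ∀ᶠ t in atTop, f' t ≤ a - k * f t)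
    (hb : a / k < b) : ∀ᶠ t in atTop, f t < b := by
  obtain ⟨T, hT⟩ := eventually_atTop.1 (hf.and hle)
  have hdecay : Tendsto (fun t => a / k + (f T - a / k) * exp (-(k * (t - T)))) atTop
      (𝓝 (a / k)) := by
    have := tendsto_exp_neg_atTop_nhds_zero.comp
      ((tendsto_atTop_add_const_right _ (-T) tendsto_id).const_mul_atTop hk)
    simpa [Function.comp_def, ← sub_eq_add_neg] using
      (this.const_mul (f T - a / k)).const_add (a / k)
  filter_upwards [hdecay.eventually_lt_const hb, eventually_ge_atTop T] with t ht hTt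
  exact (le_of_deriv_le_sub_mul hk.ne' hTt (fun u hu => (hT u hu.1).1)
    (fun u hu => (hT u hu.1).2)).trans_lt ht

theorem eventually_gt_of_sub_mul_le_deriv {f f' : ℝ → ℝ} {a k b : ℝ} (hk : 0 < k)
    (hf : ∀ᶠ t in atTop, HasDerivAt f (f' t) t) (hle : ∀ᶠ t in atTop, a - k * f t ≤ f' t)
    (hb : b < a / k) : ∀ᶠ t in atTop, b < f t := by
  have := eventually_lt_of_deriv_le_sub_mul (f := fun t => -f t) (f' := fun t => -f' t)
    (a := -a) (b := -b) hk (hf.mono fun t h => h.neg) (hle.mono fun t h => by linarith)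
    (by rw [neg_div]; linarith)
  exact this.mono fun t h => neg_lt_neg_iff.1 h

theorem tendsto_of_deriv_add_mul_tendsto {f f' : ℝ → ℝ} {a k : ℝ} (hk : 0 < k)
    (hf : ∀ᶠ t in atTop, HasDerivAt f (f' t) t)
    (h : Tendsto (fun t => f' t + k * f t) atTop (𝓝 a)) : Tendsto f atTop (𝓝 (a / k)) := by
  refine tendsto_order.2 ⟨fun b hb => ?_, fun b hb => ?_⟩
  · obtain ⟨c, hbc, hca⟩ := exists_between ((lt_div_iff₀ hk).1 hb)
    exact eventually_gt_of_sub_mul_le_deriv hk hf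
      ((h.eventually_const_lt hca).mono fun t h => by linarith) ((lt_div_iff₀ hk).2 hbc)
  · obtain ⟨c, hac, hcb⟩ := exists_between ((div_lt_iff₀ hk).1 hb)
    exact eventually_lt_of_deriv_le_sub_mul hk hf
      ((h.eventually_lt_const hac).mono fun t h => by linarith) ((div_lt_iff₀ hk).2 hcb)

structure IsSIRSolution_s18 (A β μ q : ℝ) (S I : ℝ → ℝ) : Prop where
  hasDerivAt_S : ∀ t ≥ (0 : ℝ), HasDerivAt S (A - β * S t * I t - μ * S t) t
  hasDerivAt_I : ∀ t ≥ (0 : ℝ), HasDerivAt I (β * S t * I t - (q + μ) * I t) t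

/-- Its logarithm `log I + (β / μ) S` has derivative `(A β - μ (q + μ) - β² S I) / μ`, which is
nonpositive when `R₀ ≤ 1`. -/
noncomputable def sirLyapunov (β μ : ℝ) (S I : ℝ → ℝ) (t : ℝ) : ℝ := I t * exp (β / μ * S t)

theorem I_le_sirLyapunov {β μ : ℝ} {S I : ℝ → ℝ} {t : ℝ} (hβ : 0 ≤ β) (hμ : 0 < μ)
    (hSt : 0 ≤ S t) (hIt : 0 ≤ I t) : I t ≤ sirLyapunov β μ S I t :=
  le_mul_of_one_le_right hIt (one_le_exp (by positivity))

namespace IsSIRSolution_s18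

variable {A β μ q : ℝ} {S I : ℝ → ℝ}

theorem continuousOn_S (h : IsSIRSolution_s18 A β μ q S I) : ContinuousOn S (Ici 0) :=
  fun t ht => (h.hasDerivAt_S t ht).continuousAt.continuousWithinAt

theorem continuousOn_I (h : IsSIRSolution_s18 A β μ q S I) : ContinuousOn I (Ici 0) :=
  fun t ht => (h.hasDerivAt_I t ht).continuousAt.continuousWithinAt

theorem S_pos (h : IsSIRSolution_s18 A β μ q S I) (hA : 0 ≤ A) (hS0 : 0 < S 0) :
    ∀ t ≥ 0, 0 < S t :=
  pos_of_mul_le_deriv h.hasDerivAt_S (c := fun t => -(β * I t + μ))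
    ((h.continuousOn_I.const_smul β).add continuousOn_const).neg
    (fun t _ => by linarith) hS0

theorem I_pos (h : IsSIRSolution_s18 A β μ q S I) (hI0 : 0 < I 0) : ∀ t ≥ 0, 0 < I t :=
  pos_of_mul_le_deriv h.hasDerivAt_I (c := fun t => β * S t - (q + μ))
    ((h.continuousOn_S.const_smul β).sub continuousOn_const)
    (fun t _ => by linarith) hI0

theorem S_le (h : IsSIRSolution_s18 A β μ q S I) (hβ : 0 ≤ β) (hμ : 0 < μ)
    (hS : ∀ t ≥ 0, 0 < S t) (hI : ∀ t ≥ 0, 0 < I t) : ∀ t ≥ 0, S t ≤ max (S 0) (A / μ) :=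
  le_max_of_deriv_le_sub_mul hμ h.hasDerivAt_S fun t ht => by
    nlinarith [mul_nonneg (mul_nonneg hβ (hS t ht).le) (hI t ht).le]

theorem antitoneOn_sirLyapunov (h : IsSIRSolution_s18 A β μ q S I) (hμ : 0 < μ)
    (hR₀ : A * β ≤ μ * (q + μ)) (hS : ∀ t ≥ 0, 0 < S t) (hI : ∀ t ≥ 0, 0 < I t) :
    AntitoneOn (sirLyapunov β μ S I) (Ici 0) := by
  refine antitoneOn_of_hasDerivAt_nonpos (convex_Ici 0) (fun t ht => ?_) (fun t ht => ?_)
    (f' := fun t => exp (β / μ * S t) * I t / μ * (A * β - μ * (q + μ) - β ^ 2 * S t * I t))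
  · refine ((h.hasDerivAt_I t ht).mul
      ((h.hasDerivAt_S t ht).const_mul (β / μ)).exp).congr_deriv ?_
    field_simp
    ring
  · have ht := interior_subset ht
    have : 0 ≤ β ^ 2 * S t * I t := by have := hS t ht; have := hI t ht; positivity
    exact mul_nonpos_of_nonneg_of_nonpos (by have := hI t ht; positivity) (by linarith)

theorem exists_sirLyapunov_lt (h : IsSIRSolution_s18 A β μ q S I) (hA : 0 < A) (hβ : 0 < β)
    (hμ : 0 < μ) (hR₀ : A * β ≤ μ * (q + μ)) (hS : ∀ t ≥ 0, 0 < S t) (hI : ∀ t ≥ 0, 0 < I t)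
    {ε : ℝ} (hε : 0 < ε) : ∃ T ≥ 0, sirLyapunov β μ S I T < ε := by
  by_contra! hV
  set M := max (S 0) (A / μ)
  set δ := ε * exp (-(β / μ * M))
  have hδ : 0 < δ := by positivity
  have hIδ : ∀ t ≥ 0, δ ≤ I t := fun t ht => by
    have hI_eq : I t = sirLyapunov β μ S I t * exp (-(β / μ * S t)) := by
      rw [sirLyapunov, mul_assoc, ← exp_add, add_neg_cancel, exp_zero, mul_one]
    have hM : exp (-(β / μ * M)) ≤ exp (-(β / μ * S t)) := by
      gcongr; exact h.S_le hβ.le hμ hS hI t ht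
    rw [hI_eq]
    exact mul_le_mul (hV t ht) hM (exp_pos _).le (hε.le.trans (hV t ht))
  set b := (A / (μ + β * δ) + A / μ) / 2 with hb
  have hbA : b < A / μ := by
    have : A / (μ + β * δ) < A / μ := div_lt_div_of_pos_left hA hμ (by nlinarith)
    linarith
  have hSb : ∀ᶠ t in atTop, S t < b := by
    refine eventually_lt_of_deriv_le_sub_mul (a := A) (k := μ + β * δ) (by positivity)
      ((eventually_ge_atTop 0).mono h.hasDerivAt_S) ?_ (by linarith)
    filter_upwards [eventually_ge_atTop 0] with t ht
    nlinarith [mul_le_mul_of_nonneg_left (hIδ t ht) (mul_pos hβ (hS t ht)).le]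
  have hIδ' : ∀ᶠ t in atTop, I t < δ := by
    have hk : 0 < q + μ - β * b := by
      have := (lt_div_iff₀ hμ).1 hbA
      nlinarith
    refine eventually_lt_of_deriv_le_sub_mul (a := 0) hk
      ((eventually_ge_atTop 0).mono h.hasDerivAt_I) ?_ (by rwa [zero_div])
    filter_upwards [hSb, eventually_ge_atTop 0] with t hSt ht
    nlinarith [mul_lt_mul_of_pos_right hSt (mul_pos hβ (hI t ht))]
  obtain ⟨t, hIt, ht⟩ := (hIδ'.and (eventually_ge_atTop 0)).exists
  exact (hIδ t ht).not_gt hIt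

theorem tendsto_I_s18 (h : IsSIRSolution_s18 A β μ q S I) (hA : 0 < A) (hβ : 0 < β)
    (hμ : 0 < μ) (hR₀ : A * β ≤ μ * (q + μ)) (hS : ∀ t ≥ 0, 0 < S t) (hI : ∀ t ≥ 0, 0 < I t) :
    Tendsto I atTop (𝓝 0) := by
  refine tendsto_order.2 ⟨fun a ha => ?_, fun ε hε => ?_⟩
  · filter_upwards [eventually_ge_atTop 0] with t ht using ha.trans (hI t ht)
  obtain ⟨T, hT, hVT⟩ := h.exists_sirLyapunov_lt hA hβ hμ hR₀ hS hI hε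
  filter_upwards [eventually_ge_atTop T] with t hTt
  have ht : 0 ≤ t := hT.trans hTt
  calc I t ≤ sirLyapunov β μ S I t := I_le_sirLyapunov hβ.le hμ (hS t ht).le (hI t ht).le
    _ ≤ sirLyapunov β μ S I T := h.antitoneOn_sirLyapunov hμ hR₀ hS hI hT ht hTt
    _ < ε := hVT

theorem tendsto_S_s18 (h : IsSIRSolution_s18 A β μ q S I) (hβ : 0 ≤ β) (hμ : 0 < μ)
    (hS : ∀ t ≥ 0, 0 < S t) (hI : ∀ t ≥ 0, 0 < I t) (hIlim : Tendsto I atTop (𝓝 0)) :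
    Tendsto S atTop (𝓝 (A / μ)) := by
  have hSI : Tendsto (fun t => β * S t * I t) atTop (𝓝 0) := by
    refine tendsto_of_tendsto_of_tendsto_of_le_of_le' tendsto_const_nhds
      (by simpa using hIlim.const_mul (β * max (S 0) (A / μ))) ?_ ?_
    all_goals filter_upwards [eventually_ge_atTop 0] with t ht
    · have := hS t ht; have := hI t ht; positivity
    · exact mul_le_mul_of_nonneg_right
        (mul_le_mul_of_nonneg_left (h.S_le hβ hμ hS hI t ht) hβ) (hI t ht).le
  refine tendsto_of_deriv_add_mul_tendsto hμ ((eventually_ge_atTop 0).mono h.hasDerivAt_S) ?_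
  simpa using tendsto_const_nhds (x := A) |>.sub hSI

end IsSIRSolution_s18

open Filter in
/-- Suppose `R₀ ≤ 1`. Every solution of the planar SIR system with
`S(0) > 0`, `I(0) > 0` satisfies `S(t) → A/μ` and `I(t) → 0` as `t → ∞`: the disease-free
equilibrium `E₀ = (A/μ, 0)` is globally asymptotically stable in the open positive
quadrant. -/
theorem sir_global_stability_dfe (A β μ q : ℝ)
    (hA : 0 < A) (hβ : 0 < β) (hμ : 0 < μ) (hq : 0 < q)
    (R₀ : ℝ) (hR : R₀ = A * β / (μ * (q + μ))) (hR1 : R₀ ≤ 1)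
    (S I : ℝ → ℝ)
    (hS : ∀ t ≥ (0 : ℝ), HasDerivAt S (A - β * S t * I t - μ * S t) t)
    (hI : ∀ t ≥ (0 : ℝ), HasDerivAt I (β * S t * I t - (q + μ) * I t) t)
    (hS0 : 0 < S 0) (hI0 : 0 < I 0) :
    Tendsto S atTop (nhds (A / μ)) ∧ Tendsto I atTop (nhds 0) := by
  have hR₀ : A * β ≤ μ * (q + μ) := (div_le_one (by positivity)).1 (hR ▸ hR1)
  have h : IsSIRSolution_s18 A β μ q S I := ⟨hS, hI⟩
  have hSpos := h.S_pos hA.le hS0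
  have hIpos := h.I_pos hI0
  have hIlim := h.tendsto_I_s18 hA hβ hμ hR₀ hSpos hIpos
  exact ⟨h.tendsto_S_s18 hβ.le hμ hSpos hIpos hIlim, hIlim⟩
end
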